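/- Let M ⊆ Y_A be the set of malicious prompts, defined by: max_{y_D} r(y_A, y_D) = 0 for y_A ∈ M and max_{y_D} r(y_A, y_D) > 0 for y_A ∉ M. Let π_D^rec be an oracle defender policy that for every y_A places all its mass on responses attaining max_{y_D} r(y_A, y_D). If M is nonempty and the attacker policy π_A* is supported on M (i.e., π_A*(y_A) > 0 implies y_A ∈ M), then the pair (π_A*, π_D^rec) is a Nash equilibrium. -/
import Mathlib


/-- Let `M ⊆ Y_A` be the set of malicious prompts, characterised by
`max_d r a d = 0` for `a ∈ M` and `max_d r a d > 0` for `a ∉ M`.  Let `πD^rec` be an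
oracle defender policy that for every prompt `a` places all its mass on responses
attaining `max_d r a d`.  If `M` is nonempty and the attacker policy `πA*` is supported
on `M` (i.e. `πA* a > 0 → a ∈ M`), then `(πA*, πD^rec)` is a Nash equilibrium:
`V(πA*, πD) ≤ V(πA*, πD^rec)` for every defender policy `πD`, and
`V(πA*, πD^rec) ≤ V(πA, πD^rec)` for every attacker policy `πA`,
where `V(πA, πD) = Σ_a πA a * Σ_d πD a d * r a d`. -/
theorem oracle_defender_nash_equilibrium
    {YA YD : Type*} [Fintype YA] [Fintype YD] [Nonempty YA] [Nonempty YD]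
    (r : YA → YD → ℝ) (hr : ∀ a d, -1 ≤ r a d ∧ r a d ≤ 1)
    (M : Set YA)
    (hM0 : ∀ a ∈ M, Finset.univ.sup' Finset.univ_nonempty (fun d => r a d) = 0)
    (hM1 : ∀ a ∉ M, 0 < Finset.univ.sup' Finset.univ_nonempty (fun d => r a d))
    (hMne : M.Nonempty)
    (πDrec : YA → YD → ℝ)
    (hrec0 : ∀ a d, 0 ≤ πDrec a d) (hrec1 : ∀ a, ∑ d, πDrec a d = 1)
    (hrecOpt : ∀ a d, 0 < πDrec a d →
      r a d = Finset.univ.sup' Finset.univ_nonempty (fun d' => r a d'))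
    (πAstar : YA → ℝ) (hs0 : ∀ a, 0 ≤ πAstar a) (hs1 : ∑ a, πAstar a = 1)
    (hsupp : ∀ a, 0 < πAstar a → a ∈ M) :
    (∀ πD : YA → YD → ℝ, (∀ a d, 0 ≤ πD a d) → (∀ a, ∑ d, πD a d = 1) →
      ∑ a, πAstar a * ∑ d, πD a d * r a d
        ≤ ∑ a, πAstar a * ∑ d, πDrec a d * r a d) ∧
    (∀ πA : YA → ℝ, (∀ a, 0 ≤ πA a) → (∑ a, πA a = 1) →
      ∑ a, πAstar a * ∑ d, πDrec a d * r a d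
        ≤ ∑ a, πA a * ∑ d, πDrec a d * r a d) := by
  set sup : YA → ℝ := fun a => Finset.univ.sup' Finset.univ_nonempty (fun d => r a d)
    with hsup
  -- πDrec's inner value equals the sup
  have hrecval : ∀ a, ∑ d, πDrec a d * r a d = sup a := by
    intro a
    have : ∑ d, πDrec a d * r a d = ∑ d, πDrec a d * sup a := by
      apply Finset.sum_congr rfl
      intro d _
      rcases lt_or_eq_of_le (hrec0 a d) with h | h
      · rw [hrecOpt a d h]
      · rw [← h]; ring
    rw [this, ← Finset.sum_mul, hrec1 a, one_mul]
  -- sup is nonneg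
  have hsupnn : ∀ a, 0 ≤ sup a := by
    intro a
    by_cases h : a ∈ M
    · exact le_of_eq (show sup a = 0 from hM0 a h).symm
    · exact le_of_lt (hM1 a h)
  -- V(πA*, πDrec) = 0
  have hVstar : ∑ a, πAstar a * ∑ d, πDrec a d * r a d = 0 := by
    apply Finset.sum_eq_zero
    intro a _
    rcases lt_or_eq_of_le (hs0 a) with h | h
    · rw [hrecval a, show sup a = 0 from hM0 a (hsupp a h), mul_zero]
    · rw [← h, zero_mul]
  constructor
  · intro πD hπD0 hπD1
    rw [hVstar]
    apply Finset.sum_nonpos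
    intro a _
    rcases lt_or_eq_of_le (hs0 a) with h | h
    · apply mul_nonpos_of_nonneg_of_nonpos (le_of_lt h)
      have hinner : ∑ d, πD a d * r a d ≤ ∑ d, πD a d * sup a := by
        apply Finset.sum_le_sum
        intro d _
        exact mul_le_mul_of_nonneg_left
          (Finset.le_sup' (fun d' => r a d') (Finset.mem_univ d)) (hπD0 a d)
      have : ∑ d, πD a d * sup a = sup a := by
        rw [← Finset.sum_mul, hπD1 a, one_mul]
      have h0 : sup a = 0 := hM0 a (hsupp a h)
      linarith
    · rw [← h, zero_mul]
  · intro πA hπA0 hπA1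
    rw [hVstar]
    apply Finset.sum_nonneg
    intro a _
    rw [hrecval a]
    exact mul_nonneg (hπA0 a) (hsupnn a)
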